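/- Let A, A′ : ℝ^d → ℝ^d be expansive linear maps and C : ℝ^d → ℝ^d an invertible linear map such that A′ = C^{-1} A C. Then for every measurable set E ⊆ ℝ^d of positive measure, E ∈ 𝓔_A if and only if C^{-1}E ∈ 𝓔_{A′}; equivalently 𝓔_A = C 𝓔_{A′} := {C F : F ∈ 𝓔_{A′}}. -/

import Mathlib

open MeasureTheory Filter Metric Topology

noncomputable section

/-- A linear map of `ℝ^d` is expansive if every complex eigenvalue (i.e. every complex root of
its characteristic polynomial) has absolute value greater than 1. -/
def IsExpansive {d : ℕ} (A : EuclideanSpace ℝ (Fin d) →ₗ[ℝ] EuclideanSpace ℝ (Fin d)) : Prop :=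
  ∀ z : ℂ, (Polynomial.map (algebraMap ℝ ℂ) (LinearMap.charpoly A)).IsRoot z →
    1 < ‖z‖

/-- The origin is a point of `A`-density for `E`: for every `r > 0`,
`|E ∩ A⁻ʲB_r| / |A⁻ʲB_r| → 1` as `j → ∞`. -/
def HasADensityZero {d : ℕ} (A : EuclideanSpace ℝ (Fin d) →ₗ[ℝ] EuclideanSpace ℝ (Fin d))
    (E : Set (EuclideanSpace ℝ (Fin d))) : Prop :=
  ∀ r : ℝ, 0 < r →
    Tendsto (fun j : ℕ =>
        volume (E ∩ ⇑(A ^ j) ⁻¹' ball (0 : EuclideanSpace ℝ (Fin d)) r) /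
          volume (⇑(A ^ j) ⁻¹' ball (0 : EuclideanSpace ℝ (Fin d)) r))
      atTop (𝓝 1)

/-- The family `𝓔_A` of measurable sets having the origin as a point of `A`-density. -/
def densityFamily {d : ℕ} (A : EuclideanSpace ℝ (Fin d) →ₗ[ℝ] EuclideanSpace ℝ (Fin d)) :
    Set (Set (EuclideanSpace ℝ (Fin d))) :=
  {E | MeasurableSet E ∧ HasADensityZero A E}

/-- An expansive map has nonzero determinant. -/
lemma det_ne_zero_of_isExpansive {d : ℕ}
    {A : EuclideanSpace ℝ (Fin d) →ₗ[ℝ] EuclideanSpace ℝ (Fin d)}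
    (hA : IsExpansive A) : LinearMap.det A ≠ 0 := by
  intro h
  have hco : (LinearMap.charpoly A).coeff 0 = 0 := by
    have hd := LinearMap.det_eq_sign_charpoly_coeff A
    rw [h] at hd
    have := hd.symm
    rcases mul_eq_zero.1 this with h1 | h1
    · exact absurd h1 (pow_ne_zero _ (by norm_num))
    · exact h1
  have hroot : (Polynomial.map (algebraMap ℝ ℂ) (LinearMap.charpoly A)).IsRoot 0 := by
    simp only [Polynomial.IsRoot, Polynomial.eval_map, Polynomial.eval₂_at_zero, hco, map_zero]
  have := hA 0 hroot
  simp only [norm_zero] at this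
  norm_num at this

/-- auxiliary ENNReal computation -/
lemma ennreal_aux (x c b1 b2 : ENNReal) (hc : c ≠ 0) (hc' : c ≠ ⊤)
    (hb1 : b1 ≠ 0) (hb1' : b1 ≠ ⊤) (hb2 : b2 ≠ 0) (hb2' : b2 ≠ ⊤) :
    x / (c * b1) = b2 / b1 * (x / (c * b2)) := by
  rw [div_eq_mul_inv, div_eq_mul_inv, div_eq_mul_inv,
    ENNReal.mul_inv (Or.inl hc) (Or.inl hc'), ENNReal.mul_inv (Or.inl hc) (Or.inl hc')]
  have h2 : b2 * b2⁻¹ = 1 := ENNReal.mul_inv_cancel hb2 hb2'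
  have : b2 * b1⁻¹ * (x * (c⁻¹ * b2⁻¹)) = b2 * b2⁻¹ * (x * (c⁻¹ * b1⁻¹)) := by ring
  rw [this, h2, one_mul]

lemma ratio_eq_one_sub {d' : ℕ} {E P : Set (EuclideanSpace ℝ (Fin d'))}
    (hEm : MeasurableSet E) (hP : volume P ≠ 0) (hP' : volume P ≠ ⊤) :
    volume (E ∩ P) / volume P = 1 - volume (P \ E) / volume P := by
  have hadd : volume (E ∩ P) + volume (P \ E) = volume P := by
    rw [Set.inter_comm]
    exact measure_inter_add_diff P hEm
  have hdiv : volume (E ∩ P) / volume P + volume (P \ E) / volume P = 1 := by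
    rw [ENNReal.div_add_div_same, hadd, ENNReal.div_self hP hP']
  have hfin : volume (P \ E) / volume P ≠ ⊤ :=
    (ENNReal.div_lt_top (ne_top_of_le_ne_top hP' (measure_mono Set.diff_subset)) hP).ne
  exact ENNReal.eq_sub_of_add_eq hfin hdiv

lemma def_le_one {d' : ℕ} {E P : Set (EuclideanSpace ℝ (Fin d'))} :
    volume (P \ E) / volume P ≤ 1 :=
  ENNReal.div_le_of_le_mul (by rw [one_mul]; exact measure_mono Set.diff_subset)

/-- Main squeeze lemma: if `E` has `A`-density one at `0` (w.r.t. balls), the same holds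
w.r.t. any measurable set squeezed between two balls. -/
lemma density_for_set {d : ℕ} (A : EuclideanSpace ℝ (Fin d) →ₗ[ℝ] EuclideanSpace ℝ (Fin d))
    (hdet : LinearMap.det A ≠ 0) {E : Set (EuclideanSpace ℝ (Fin d))}
    (hEm : MeasurableSet E) (hE : HasADensityZero A E)
    {U : Set (EuclideanSpace ℝ (Fin d))} {r1 r2 : ℝ} (hr1 : 0 < r1)
    (hU1 : ball (0 : EuclideanSpace ℝ (Fin d)) r1 ⊆ U)
    (hU2 : U ⊆ ball (0 : EuclideanSpace ℝ (Fin d)) r2) :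
    Tendsto (fun j : ℕ =>
        volume (E ∩ ⇑(A ^ j) ⁻¹' U) / volume (⇑(A ^ j) ⁻¹' U)) atTop (𝓝 1) := by
  have hr2 : 0 < r2 := by
    have h0 := hU2 (hU1 (mem_ball_self hr1))
    rw [mem_ball, dist_self] at h0
    exact h0
  -- determinant of powers
  have hdetj : ∀ j : ℕ, LinearMap.det (A ^ j) ≠ 0 := fun j => by
    rw [map_pow]; exact pow_ne_zero _ hdet
  set c : ℕ → ENNReal := fun j => ENNReal.ofReal |(LinearMap.det (A ^ j))⁻¹| with hc
  have key : ∀ (j : ℕ) (S : Set (EuclideanSpace ℝ (Fin d))),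
      volume (⇑(A ^ j) ⁻¹' S) = c j * volume S := fun j S =>
    Measure.addHaar_preimage_linearMap volume (hdetj j) S
  have hc0 : ∀ j, c j ≠ 0 := fun j => by
    simp only [hc, ne_eq, ENNReal.ofReal_eq_zero, not_le]
    exact abs_pos.2 (inv_ne_zero (hdetj j))
  have hc' : ∀ j, c j ≠ ⊤ := fun j => ENNReal.ofReal_ne_top
  have b1pos : volume (ball (0 : EuclideanSpace ℝ (Fin d)) r1) ≠ 0 :=
    (measure_ball_pos volume _ hr1).ne'
  have b1fin : volume (ball (0 : EuclideanSpace ℝ (Fin d)) r1) ≠ ⊤ :=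
    measure_ball_lt_top.ne
  have b2pos : volume (ball (0 : EuclideanSpace ℝ (Fin d)) r2) ≠ 0 :=
    (measure_ball_pos volume _ hr2).ne'
  have b2fin : volume (ball (0 : EuclideanSpace ℝ (Fin d)) r2) ≠ ⊤ :=
    measure_ball_lt_top.ne
  have hUpos : volume U ≠ 0 := fun h =>
    b1pos (measure_mono_null hU1 h)
  have hUfin : volume U ≠ ⊤ := ne_top_of_le_ne_top b2fin (measure_mono hU2)
  have hPUpos : ∀ j, volume (⇑(A ^ j) ⁻¹' U) ≠ 0 := fun j => by
    rw [key]; exact mul_ne_zero (hc0 j) hUpos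
  have hPUfin : ∀ j, volume (⇑(A ^ j) ⁻¹' U) ≠ ⊤ := fun j => by
    rw [key]; exact ENNReal.mul_ne_top (hc' j) hUfin
  have hPB2pos : ∀ j, volume (⇑(A ^ j) ⁻¹' ball (0 : EuclideanSpace ℝ (Fin d)) r2) ≠ 0 :=
    fun j => by rw [key]; exact mul_ne_zero (hc0 j) b2pos
  have hPB2fin : ∀ j, volume (⇑(A ^ j) ⁻¹' ball (0 : EuclideanSpace ℝ (Fin d)) r2) ≠ ⊤ :=
    fun j => by rw [key]; exact ENNReal.mul_ne_top (hc' j) b2fin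
  -- deficiencies
  set defB : ℕ → ENNReal := fun j =>
    volume ((⇑(A ^ j) ⁻¹' ball (0 : EuclideanSpace ℝ (Fin d)) r2) \ E) /
      volume (⇑(A ^ j) ⁻¹' ball (0 : EuclideanSpace ℝ (Fin d)) r2) with hdefB
  set defU : ℕ → ENNReal := fun j =>
    volume ((⇑(A ^ j) ⁻¹' U) \ E) / volume (⇑(A ^ j) ⁻¹' U) with hdefU
  -- Step A: defB → 0
  have hB : Tendsto (fun j => 1 - defB j) atTop (𝓝 1) := by
    have := hE r2 hr2
    refine this.congr fun j => ?_
    exact ratio_eq_one_sub hEm (hPB2pos j) (hPB2fin j)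
  have hdefB0 : Tendsto defB atTop (𝓝 0) := by
    have h2 : Tendsto (fun j => 1 - (1 - defB j)) atTop (𝓝 (1 - 1)) :=
      ENNReal.Tendsto.sub tendsto_const_nhds hB (Or.inl ENNReal.one_ne_top)
    simp only [tsub_self] at h2
    refine h2.congr fun j => ?_
    exact ENNReal.sub_sub_cancel ENNReal.one_ne_top def_le_one
  -- Step B: defU j ≤ K * defB j
  set K : ENNReal := volume (ball (0 : EuclideanSpace ℝ (Fin d)) r2) /
      volume (ball (0 : EuclideanSpace ℝ (Fin d)) r1) with hK
  have hKfin : K ≠ ⊤ := (ENNReal.div_lt_top b2fin b1pos).ne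
  have hbound : ∀ j, defU j ≤ K * defB j := fun j => by
    have h1 : defU j ≤
        volume ((⇑(A ^ j) ⁻¹' ball (0 : EuclideanSpace ℝ (Fin d)) r2) \ E) /
          volume (⇑(A ^ j) ⁻¹' ball (0 : EuclideanSpace ℝ (Fin d)) r1) :=
      ENNReal.div_le_div
        (measure_mono (Set.diff_subset_diff_left (Set.preimage_mono hU2)))
        (measure_mono (Set.preimage_mono hU1))
    refine h1.trans (le_of_eq ?_)
    rw [key j (ball _ r1), hdefB]
    simp only
    rw [key j (ball _ r2), hK]
    exact ennreal_aux _ _ _ _ (hc0 j) (hc' j) b1pos b1fin b2pos b2fin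
  -- Step C: defU → 0
  have hdefU0 : Tendsto defU atTop (𝓝 0) := by
    have hup : Tendsto (fun j => K * defB j) atTop (𝓝 (K * 0)) :=
      ENNReal.Tendsto.const_mul hdefB0 (Or.inr hKfin)
    rw [mul_zero] at hup
    exact tendsto_of_tendsto_of_tendsto_of_le_of_le tendsto_const_nhds hup
      (fun j => zero_le) hbound
  -- Step D: conclude
  have hfinal : Tendsto (fun j => 1 - defU j) atTop (𝓝 (1 - 0)) :=
    ENNReal.Tendsto.sub tendsto_const_nhds hdefU0 (Or.inl ENNReal.one_ne_top)
  rw [tsub_zero] at hfinal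
  refine hfinal.congr fun j => ?_
  exact (ratio_eq_one_sub hEm (hPUpos j) (hPUfin j)).symm

lemma conj_pow' {d : ℕ} (C : EuclideanSpace ℝ (Fin d) ≃ₗ[ℝ] EuclideanSpace ℝ (Fin d))
    (A : EuclideanSpace ℝ (Fin d) →ₗ[ℝ] EuclideanSpace ℝ (Fin d)) (j : ℕ) :
    (C.symm.toLinearMap ∘ₗ A ∘ₗ C.toLinearMap) ^ j
      = C.symm.toLinearMap ∘ₗ (A ^ j) ∘ₗ C.toLinearMap := by
  induction j with
  | zero => ext x; simp
  | succ n ih =>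
    rw [pow_succ, pow_succ, ih]
    ext x
    simp [Module.End.mul_apply]

lemma transfer {d : ℕ} (A : EuclideanSpace ℝ (Fin d) →ₗ[ℝ] EuclideanSpace ℝ (Fin d))
    (hdet : LinearMap.det A ≠ 0)
    (C : EuclideanSpace ℝ (Fin d) ≃ₗ[ℝ] EuclideanSpace ℝ (Fin d))
    {E : Set (EuclideanSpace ℝ (Fin d))} (hEm : MeasurableSet E)
    (hE : HasADensityZero A E) :
    HasADensityZero (C.symm.toLinearMap ∘ₗ A ∘ₗ C.toLinearMap) (⇑C ⁻¹' E) := by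
  intro r hr
  set A' := C.symm.toLinearMap ∘ₗ A ∘ₗ C.toLinearMap with hA'
  set U : Set (EuclideanSpace ℝ (Fin d)) := ⇑C.symm ⁻¹' ball 0 r with hUdef
  have hCcont : Continuous ⇑C := LinearMap.continuous_of_finiteDimensional C.toLinearMap
  have hCscont : Continuous ⇑C.symm := LinearMap.continuous_of_finiteDimensional C.symm.toLinearMap
  have hUopen : IsOpen U := isOpen_ball.preimage hCscont
  have h0U : (0 : EuclideanSpace ℝ (Fin d)) ∈ U := by
    simp [hUdef, hr]
  obtain ⟨r1, hr1, hball1⟩ := Metric.isOpen_iff.1 hUopen 0 h0U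
  -- choose r2
  set Cc : EuclideanSpace ℝ (Fin d) →L[ℝ] EuclideanSpace ℝ (Fin d) :=
    ⟨C.toLinearMap, hCcont⟩ with hCc
  set r2 : ℝ := ‖Cc‖ * r + 1 with hr2def
  have hball2 : U ⊆ ball 0 r2 := by
    intro x hx
    have hx' : ‖C.symm x‖ < r := by
      simpa [hUdef, mem_ball_zero_iff] using hx
    have hxx : x = Cc (C.symm x) := by simp [hCc]
    rw [mem_ball_zero_iff, hxx]
    calc ‖Cc (C.symm x)‖ ≤ ‖Cc‖ * ‖C.symm x‖ := Cc.le_opNorm _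
      _ ≤ ‖Cc‖ * r := mul_le_mul_of_nonneg_left hx'.le (norm_nonneg _)
      _ < r2 := by rw [hr2def]; linarith
  have hball1' : ball (0 : EuclideanSpace ℝ (Fin d)) r1 ⊆ U := by
    simpa using hball1
  have main := density_for_set A hdet hEm hE hr1 hball1' hball2
  -- rewrite the sets
  have hset : ∀ j : ℕ, ⇑(A' ^ j) ⁻¹' ball (0 : EuclideanSpace ℝ (Fin d)) r
      = ⇑C ⁻¹' (⇑(A ^ j) ⁻¹' U) := by
    intro j
    rw [hA', conj_pow']
    ext x
    simp [hUdef]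
  -- determinant of C
  have hdetC : LinearMap.det C.toLinearMap ≠ 0 :=
    isUnit_iff_ne_zero.mp (LinearEquiv.isUnit_det' C)
  set k : ENNReal := ENNReal.ofReal |(LinearMap.det C.toLinearMap)⁻¹| with hk
  have hk0 : k ≠ 0 := by
    simp only [hk, ne_eq, ENNReal.ofReal_eq_zero, not_le]
    exact abs_pos.2 (inv_ne_zero hdetC)
  have hk' : k ≠ ⊤ := ENNReal.ofReal_ne_top
  have hCpre : ∀ S : Set (EuclideanSpace ℝ (Fin d)), volume (⇑C ⁻¹' S) = k * volume S :=
    fun S => Measure.addHaar_preimage_linearMap volume hdetC S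
  refine main.congr fun j => ?_
  rw [hset j]
  have : ⇑C ⁻¹' E ∩ ⇑C ⁻¹' (⇑(A ^ j) ⁻¹' U) = ⇑C ⁻¹' (E ∩ ⇑(A ^ j) ⁻¹' U) := by
    rw [Set.preimage_inter]
  rw [this, hCpre, hCpre, ENNReal.mul_div_mul_left _ _ hk0 hk']

lemma main_iff {d : ℕ} (A A' : EuclideanSpace ℝ (Fin d) →ₗ[ℝ] EuclideanSpace ℝ (Fin d))
    (hdA : LinearMap.det A ≠ 0) (hdA' : LinearMap.det A' ≠ 0)
    (C : EuclideanSpace ℝ (Fin d) ≃ₗ[ℝ] EuclideanSpace ℝ (Fin d))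
    (hconj : A' = C.symm.toLinearMap ∘ₗ A ∘ₗ C.toLinearMap)
    {E : Set (EuclideanSpace ℝ (Fin d))} (hEm : MeasurableSet E) :
    HasADensityZero A E ↔ HasADensityZero A' (⇑C ⁻¹' E) := by
  constructor
  · intro h
    rw [hconj]
    exact transfer A hdA C hEm h
  · intro h
    have hEm' : MeasurableSet (⇑C ⁻¹' E) :=
      hEm.preimage (LinearMap.continuous_of_finiteDimensional C.toLinearMap).measurable
    have := transfer A' hdA' C.symm hEm' h
    have hA : (C.symm.symm.toLinearMap ∘ₗ A' ∘ₗ C.symm.toLinearMap) = A := by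
      rw [hconj]
      ext x
      simp
    have hset : ⇑C.symm ⁻¹' (⇑C ⁻¹' E) = E := by
      ext x; simp
    rwa [hA, hset] at this

theorem stmt_7 {d : ℕ} (hd : 1 ≤ d)
    (A A' : EuclideanSpace ℝ (Fin d) →ₗ[ℝ] EuclideanSpace ℝ (Fin d))
    (hA : IsExpansive A) (hA' : IsExpansive A')
    (C : EuclideanSpace ℝ (Fin d) ≃ₗ[ℝ] EuclideanSpace ℝ (Fin d))
    (hconj : A' = C.symm.toLinearMap ∘ₗ A ∘ₗ C.toLinearMap) :
    (∀ E : Set (EuclideanSpace ℝ (Fin d)), MeasurableSet E → 0 < volume E →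
      (E ∈ densityFamily A ↔ ⇑C ⁻¹' E ∈ densityFamily A')) ∧
    densityFamily A = (fun F => ⇑C '' F) '' densityFamily A' := by
  have hdA := det_ne_zero_of_isExpansive hA
  have hdA' := det_ne_zero_of_isExpansive hA'
  have hCmeas : Measurable ⇑C :=
    (LinearMap.continuous_of_finiteDimensional C.toLinearMap).measurable
  have hCsmeas : Measurable ⇑C.symm :=
    (LinearMap.continuous_of_finiteDimensional C.symm.toLinearMap).measurable
  constructor
  · intro E hEm _
    constructor
    · rintro ⟨_, h⟩
      exact ⟨hEm.preimage hCmeas, (main_iff A A' hdA hdA' C hconj hEm).1 h⟩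
    · rintro ⟨_, h⟩
      exact ⟨hEm, (main_iff A A' hdA hdA' C hconj hEm).2 h⟩
  · ext E
    constructor
    · rintro ⟨hEm, h⟩
      refine ⟨⇑C ⁻¹' E, ⟨hEm.preimage hCmeas, (main_iff A A' hdA hdA' C hconj hEm).1 h⟩, ?_⟩
      exact Set.image_preimage_eq E C.surjective
    · rintro ⟨F, ⟨hFm, hF⟩, rfl⟩
      have himg : ⇑C '' F = ⇑C.symm ⁻¹' F := by
        ext x
        simp only [Set.mem_image, Set.mem_preimage]
        constructor
        · rintro ⟨y, hy, rfl⟩; simpa using hy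
        · intro hx; exact ⟨C.symm x, hx, by simp⟩
      have hEm : MeasurableSet (⇑C '' F) := by
        rw [himg]; exact hFm.preimage hCsmeas
      refine ⟨hEm, (main_iff A A' hdA hdA' C hconj hEm).2 ?_⟩
      rwa [Set.preimage_image_eq F C.injective]
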